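/- arXiv:2304.08567 — 8 statements merged into one kernel-verified Lean document; each statement's English description precedes it below -/
import Mathlib

section
/- If L is a genlex ordering of a set X ⊆ {0,1}^n and L' is any ordering of X, then c(L) ≤ c(L'), where c(M) is the sum over consecutive pairs (x,y) in M of λ(x,y) = max{i ∈ [n] : x_i ≠ y_i}. Moreover, the inequality is strict if L' is not genlex. -/
def lamPos {n : ℕ} (x y : Fin n → Bool) : ℕ :=
  (Finset.univ.filter (fun i : Fin n => x i ≠ y i)).sup (fun i => (i : ℕ) + 1)

def hamming {n : ℕ} (x y : Fin n → Bool) : ℕ :=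
  (Finset.univ.filter (fun i : Fin n => x i ≠ y i)).card

def sameSuffix {n : ℕ} (k : ℕ) (x y : Fin n → Bool) : Prop :=
  ∀ i : Fin n, n - k ≤ (i : ℕ) → x i = y i

def IsOrdering {n : ℕ} (X : Finset (Fin n → Bool)) (L : List (Fin n → Bool)) : Prop :=
  L.Nodup ∧ ∀ x, x ∈ L ↔ x ∈ X

def IsGenlex {n : ℕ} (L : List (Fin n → Bool)) : Prop :=
  ∀ (k i j m : ℕ) (hij : i ≤ j) (hjm : j ≤ m) (hm : m < L.length),
    sameSuffix k (L.get ⟨i, by omega⟩) (L.get ⟨m, hm⟩) →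
    sameSuffix k (L.get ⟨i, by omega⟩) (L.get ⟨j, by omega⟩)

def cost {n : ℕ} (L : List (Fin n → Bool)) : ℕ :=
  (L.zipWith lamPos L.tail).sum

/-!
For `k < n`, let `maskBelow k x` forget the coordinates of `x` below position `k`. Then
`λ(x, y)` is the number of `k < n` at which the masks of `x` and `y` differ, so `c(L)` is the
sum over `k` of the number of changes of value along the list of `k`-masks of `L`. A list taking
`v` distinct values changes value at least `v - 1` times, with equality exactly when each value
occupies one contiguous block. The set of `k`-masks depends only on `X`, and `L` is genlex
exactly when every list of masks is contiguous; so a genlex ordering attains the minimum in each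
summand, and an ordering that is not genlex exceeds it in some summand.
-/

namespace List

variable {α : Type*}

theorem sum_zipWith_finset_sum {ι M : Type*} [AddCommMonoid M] (s : Finset ι)
    (f : ι → α → α → M) (l : List α) :
    (l.zipWith (fun a b => ∑ i ∈ s, f i a b) l.tail).sum =
      ∑ i ∈ s, (l.zipWith (f i) l.tail).sum := by
  induction l with
  | nil => simp
  | cons a l ih =>
    cases l with
    | nil => simp
    | cons b l =>
      simp only [tail_cons, zipWith_cons_cons, sum_cons] at ih ⊢
      rw [ih, Finset.sum_add_distrib]

def Contiguous (l : List α) : Prop :=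
  ∀ (i j m : ℕ) (hij : i ≤ j) (hjm : j ≤ m) (hm : m < l.length),
    l[i] = l[m] → l[i] = l[j]

theorem contiguous_nil : Contiguous ([] : List α) := fun _ _ _ _ _ hm => absurd hm (by simp)

theorem contiguous_singleton (a : α) : Contiguous [a] := by
  intro i j m hij hjm hm _
  obtain rfl : i = j := by simp at hm; omega
  rfl

theorem contiguous_cons_cons_iff {a b : α} {l : List α} :
    Contiguous (a :: b :: l) ↔ Contiguous (b :: l) ∧ (a ∈ b :: l → a = b) := by
  constructor
  · intro h
    refine ⟨fun i j m hij hjm hm =>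
      h (i + 1) (j + 1) (m + 1) (by omega) (by omega) (by simp at hm ⊢; omega), ?_⟩
    intro ha
    obtain ⟨m, hm, rfl⟩ := getElem_of_mem ha
    exact h 0 1 (m + 1) (by omega) (by omega) (by simp at hm ⊢; omega) rfl
  · rintro ⟨h, hab⟩ i j m hij hjm hm heq
    rcases i with _ | i
    · rcases m with _ | m
      · obtain rfl : j = 0 := by omega
        rfl
      simp only [getElem_cons_zero, getElem_cons_succ] at heq
      obtain rfl : a = b := hab (heq ▸ getElem_mem _)
      rcases j with _ | j
      · rfl
      exact h 0 j m (by omega) (by omega) (by simpa using hm) heq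
    · rcases j with _ | j
      · omega
      rcases m with _ | m
      · omega
      exact h i j m (by omega) (by omega) (by simpa using hm) heq

variable [DecidableEq α]

def changes (l : List α) : ℕ :=
  (l.zipWith (fun a b => if a = b then 0 else 1) l.tail).sum

@[simp]
theorem changes_nil : changes ([] : List α) = 0 := rfl

@[simp]
theorem changes_singleton (a : α) : changes [a] = 0 := rfl

theorem changes_cons_cons (a b : α) (l : List α) :
    changes (a :: b :: l) = (if a = b then 0 else 1) + changes (b :: l) := rfl

theorem changes_map {β : Type*} (f : β → α) (l : List β) :
    changes (l.map f) = (l.zipWith (fun a b => if f a = f b then 0 else 1) l.tail).sum := by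
  rw [changes, ← map_tail, zipWith_map]

theorem card_toFinset_cons_cons (a b : α) (l : List α) :
    (a :: b :: l).toFinset.card = (b :: l).toFinset.card + if a ∈ b :: l then 0 else 1 := by
  simp only [toFinset_cons (l := b :: l), Finset.card_insert_eq_ite, mem_toFinset]
  split_ifs <;> rfl

theorem card_toFinset_le_changes_add_one (l : List α) : l.toFinset.card ≤ changes l + 1 := by
  induction l with
  | nil => simp
  | cons a l ih =>
    cases l with
    | nil => simp
    | cons b l =>
      rw [card_toFinset_cons_cons, changes_cons_cons]
      by_cases hab : a = b
      · simp only [hab, mem_cons_self, if_true]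
        omega
      · split_ifs <;> omega

theorem card_toFinset_eq_changes_add_one_iff {l : List α} (hl : l ≠ []) :
    l.toFinset.card = changes l + 1 ↔ Contiguous l := by
  induction l with
  | nil => exact absurd rfl hl
  | cons a l ih =>
    cases l with
    | nil => simpa using contiguous_singleton a
    | cons b l =>
      rw [card_toFinset_cons_cons, changes_cons_cons, contiguous_cons_cons_iff, ← ih (by simp)]
      have := card_toFinset_le_changes_add_one (b :: l)
      by_cases hab : a = b
      · subst hab
        simp only [mem_cons_self, if_true, forall_const, and_true, add_zero, zero_add]
      · by_cases ha : a ∈ b :: l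
        · simp only [ha, hab, if_true, if_false, imp_false, not_true, and_false, iff_false]
          omega
        · simp only [ha, hab, if_false, false_imp_iff, and_true]
          omega

theorem changes_le_changes_of_contiguous {l l' : List α} (hl : Contiguous l)
    (h : l.toFinset = l'.toFinset) : changes l ≤ changes l' := by
  rcases eq_or_ne l [] with rfl | hne
  · simp
  have := (card_toFinset_eq_changes_add_one_iff hne).2 hl
  have := card_toFinset_le_changes_add_one l'
  rw [h] at *
  omega

theorem changes_lt_changes_of_contiguous {l l' : List α} (hl : Contiguous l)
    (h : l.toFinset = l'.toFinset) (hl' : ¬ Contiguous l') : changes l < changes l' := by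
  have hne' : l' ≠ [] := by rintro rfl; exact hl' contiguous_nil
  have hne : l ≠ [] := by rintro rfl; exact hne' (toFinset_eq_empty_iff _ |>.1 h.symm)
  have := (card_toFinset_eq_changes_add_one_iff hne).2 hl
  have := card_toFinset_le_changes_add_one l'
  have := mt (card_toFinset_eq_changes_add_one_iff hne').1 hl'
  rw [h] at *
  omega

end List

section Bitstrings

variable {n : ℕ}

def maskBelow (k : ℕ) (x : Fin n → Bool) : Fin n → Bool :=
  fun i => if k ≤ (i : ℕ) then x i else false

theorem maskBelow_eq_maskBelow_iff {k : ℕ} {x y : Fin n → Bool} :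
    maskBelow k x = maskBelow k y ↔ ∀ i : Fin n, k ≤ (i : ℕ) → x i = y i := by
  simp only [funext_iff, maskBelow]
  refine forall_congr' fun i => ?_
  by_cases hi : k ≤ (i : ℕ) <;> simp [hi]

theorem sameSuffix_iff_maskBelow_eq {k : ℕ} {x y : Fin n → Bool} :
    sameSuffix k x y ↔ maskBelow (n - k) x = maskBelow (n - k) y :=
  maskBelow_eq_maskBelow_iff.symm

theorem maskBelow_ne_maskBelow_iff_lt_lamPos {k : ℕ} {x y : Fin n → Bool} :
    maskBelow k x ≠ maskBelow k y ↔ k < lamPos x y := by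
  simp only [ne_eq, maskBelow_eq_maskBelow_iff, lamPos, Finset.lt_sup_iff, Finset.mem_filter,
    Finset.mem_univ, true_and, not_forall]
  exact exists_congr fun i => by rw [Nat.lt_add_one_iff, and_comm, exists_prop]

theorem lamPos_le (x y : Fin n → Bool) : lamPos x y ≤ n :=
  Finset.sup_le fun i _ => i.isLt

theorem lamPos_eq_sum (x y : Fin n → Bool) :
    lamPos x y = ∑ k ∈ Finset.range n, if maskBelow k x = maskBelow k y then 0 else 1 := by
  have hfilter : (Finset.range n).filter (· < lamPos x y) = Finset.range (lamPos x y) := by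
    ext k
    simp only [Finset.mem_filter, Finset.mem_range]
    have := lamPos_le x y
    omega
  calc lamPos x y = ((Finset.range n).filter (· < lamPos x y)).card := by
        rw [hfilter, Finset.card_range]
    _ = ∑ k ∈ Finset.range n, if k < lamPos x y then 1 else 0 := by
        rw [Finset.sum_boole, Nat.cast_id]
    _ = _ := Finset.sum_congr rfl fun k _ => by
        simp only [← maskBelow_ne_maskBelow_iff_lt_lamPos, ite_not]

theorem cost_eq_sum_changes (L : List (Fin n → Bool)) :
    cost L = ∑ k ∈ Finset.range n, (L.map (maskBelow k)).changes := by
  simp only [cost, List.changes_map, ← List.sum_zipWith_finset_sum, ← lamPos_eq_sum]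

theorem isGenlex_iff_forall_contiguous {L : List (Fin n → Bool)} :
    IsGenlex L ↔ ∀ k < n, (L.map (maskBelow k)).Contiguous := by
  simp only [IsGenlex, List.Contiguous, List.get_eq_getElem, List.getElem_map, List.length_map,
    sameSuffix_iff_maskBelow_eq]
  constructor
  · intro h k hk i j m hij hjm hm
    simpa only [Nat.sub_sub_self hk.le] using h (n - k) i j m hij hjm hm
  · intro h k i j m hij hjm hm hs
    by_cases hk : n - k < n
    · exact h (n - k) hk i j m hij hjm hm hs
    · exact maskBelow_eq_maskBelow_iff.2 fun i _ => absurd i.isLt (by omega)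

theorem IsOrdering.toFinset_map_eq {X : Finset (Fin n → Bool)} {L L' : List (Fin n → Bool)}
    (hL : IsOrdering X L) (hL' : IsOrdering X L') {β : Type*} [DecidableEq β]
    (f : (Fin n → Bool) → β) : (L.map f).toFinset = (L'.map f).toFinset := by
  ext b
  simp only [List.mem_toFinset, List.mem_map, hL.2, hL'.2]

end Bitstrings

theorem genlex_cost_optimal {n : ℕ} (X : Finset (Fin n → Bool))
    (L L' : List (Fin n → Bool))
    (hL : IsOrdering X L) (hgen : IsGenlex L) (hL' : IsOrdering X L') :
    cost L ≤ cost L' ∧ (¬ IsGenlex L' → cost L < cost L') := by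
  have hcontig := isGenlex_iff_forall_contiguous.1 hgen
  have hvalues := fun k => hL.toFinset_map_eq hL' (maskBelow k)
  have hle : ∀ k ∈ Finset.range n,
      (L.map (maskBelow k)).changes ≤ (L'.map (maskBelow k)).changes := fun k hk =>
    List.changes_le_changes_of_contiguous (hcontig k (Finset.mem_range.1 hk)) (hvalues k)
  rw [cost_eq_sum_changes, cost_eq_sum_changes]
  refine ⟨Finset.sum_le_sum hle, fun hnot => ?_⟩
  obtain ⟨k, hk, hbad⟩ : ∃ k < n, ¬ (L'.map (maskBelow k)).Contiguous := by
    simpa using mt isGenlex_iff_forall_contiguous.2 hnot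
  exact Finset.sum_lt_sum hle ⟨k, Finset.mem_range.2 hk,
    List.changes_lt_changes_of_contiguous (hcontig k hk) (hvalues k) hbad⟩
end

section
/- If L = x_1,...,x_ℓ is a genlex ordering of X ⊆ {0,1}^n, then for any three indices i < j < k we have λ(x_i, x_j) ≠ λ(x_j, x_k). -/
/-!
If `λ(x, y) = λ(y, z)`, then `x` and `z` both differ from `y` at that top bit and agree with it
above, so, bits being binary, `λ(x, z) < λ(x, y)`. On the other hand, sharing the suffix after
position `m` means `λ ≤ m`, so genlex says that `λ(x_i, x_j) ≤ λ(x_i, x_k)` whenever `i ≤ j ≤ k`.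
Together with `λ(x_i, x_j) = λ(x_j, x_k)` this gives `λ(x_i, x_j) ≤ λ(x_i, x_k) < λ(x_i, x_j)`.
-/

namespace lamPos

variable {n : ℕ}

theorem le_iff {x y : Fin n → Bool} {m : ℕ} :
    lamPos x y ≤ m ↔ ∀ i : Fin n, m ≤ i → x i = y i := by
  simp only [lamPos, Finset.sup_le_iff, Finset.mem_filter, Finset.mem_univ, true_and]
  exact forall_congr' fun i => by grind

theorem le_length (x y : Fin n → Bool) : lamPos x y ≤ n :=
  le_iff.mpr fun i hi => absurd i.isLt (by omega)

theorem pos_of_ne {x y : Fin n → Bool} (h : x ≠ y) : 0 < lamPos x y := by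
  by_contra! h0
  exact h (funext fun i => le_iff.mp h0 i (Nat.zero_le _))

theorem ne_of_succ_eq {x y : Fin n → Bool} {i : Fin n} (hi : (i : ℕ) + 1 = lamPos x y) :
    x i ≠ y i := by
  intro hxy
  suffices lamPos x y ≤ i by omega
  refine le_iff.mpr fun j hj => ?_
  rcases hj.lt_or_eq with hj | hj
  · exact le_iff.mp le_rfl j (by omega)
  · rwa [Fin.ext hj] at hxy

theorem lt_of_eq {x y z : Fin n → Bool} (hpos : 0 < lamPos x y)
    (h : lamPos x y = lamPos y z) : lamPos x z < lamPos x y := by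
  obtain ⟨p, hp⟩ : ∃ p : Fin n, (p : ℕ) + 1 = lamPos x y :=
    ⟨⟨lamPos x y - 1, by have := le_length x y; omega⟩, by simp only; omega⟩
  have hxy : x p ≠ y p := ne_of_succ_eq hp
  have hyz : y p ≠ z p := ne_of_succ_eq (hp.trans h)
  suffices lamPos x z ≤ p by omega
  refine le_iff.mpr fun i hi => ?_
  rcases hi.lt_or_eq with hi | hi
  · exact (le_iff.mp le_rfl i (by omega)).trans (le_iff.mp h.ge i (by omega))
  · rw [← Fin.ext hi]
    revert hxy hyz
    cases x p <;> cases y p <;> cases z p <;> decide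

end lamPos

theorem sameSuffix_iff_lamPos_le {n k : ℕ} {x y : Fin n → Bool} :
    sameSuffix k x y ↔ lamPos x y ≤ n - k :=
  lamPos.le_iff.symm

theorem IsGenlex.lamPos_le {n : ℕ} {L : List (Fin n → Bool)} (hgen : IsGenlex L)
    {i j k : ℕ} (hij : i ≤ j) (hjk : j ≤ k) (hk : k < L.length) :
    lamPos (L.get ⟨i, by omega⟩) (L.get ⟨j, by omega⟩) ≤
      lamPos (L.get ⟨i, by omega⟩) (L.get ⟨k, hk⟩) := by
  have := lamPos.le_length (L.get ⟨i, by omega⟩) (L.get ⟨k, hk⟩)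
  simpa only [sameSuffix_iff_lamPos_le, Nat.sub_sub_self this, le_rfl, forall_const] using
    hgen (n - lamPos (L.get ⟨i, by omega⟩) (L.get ⟨k, hk⟩)) i j k hij hjk hk

theorem genlex_before_after {n : ℕ} (X : Finset (Fin n → Bool))
    (L : List (Fin n → Bool)) (hL : IsOrdering X L) (hgen : IsGenlex L)
    (i j k : ℕ) (hij : i < j) (hjk : j < k) (hk : k < L.length) :
    lamPos (L.get ⟨i, by omega⟩) (L.get ⟨j, by omega⟩) ≠
      lamPos (L.get ⟨j, by omega⟩) (L.get ⟨k, hk⟩) := by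
  intro heq
  have hne : L.get ⟨i, by omega⟩ ≠ L.get ⟨j, by omega⟩ := fun h =>
    hij.ne (Fin.mk.inj_iff.mp (hL.1.get_inj_iff.mp h))
  have hmono := hgen.lamPos_le hij.le hjk.le hk
  have hlt := lamPos.lt_of_eq (lamPos.pos_of_ne hne) heq
  omega
end

section
/- Let L = x_1,...,x_ℓ be a genlex ordering of X ⊆ {0,1}^n, let 1 ≤ i < ℓ, and let β := min B_L(x_i) be the minimum unseen branching of x_i. Then every x_j ∈ X with x_j ≠ x_i and λ(x_i, x_j) = β satisfies j > i. -/
/-!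
If `x_j` with `j < i` had `λ(x_i, x_j) = β`, pick `m > i` realising `β = λ(x_i, x_m)`. Both `x_j` and
`x_m` agree with `x_i` above position `β` and differ from it at `β`, so, bits being binary, `x_j` and
`x_m` share the suffix starting at `β`. Genlex then forces `x_i`, which lies between them, to share
that suffix too, contradicting `x_i β ≠ x_j β`.
-/

section lamPos

variable {n : ℕ} {x y z : Fin n → Bool}

theorem lamPos_self : lamPos x x = 0 := by
  simp [lamPos]

theorem apply_eq_of_lamPos_le {q : Fin n} (hq : lamPos x y ≤ q) : x q = y q := by
  by_contra hne
  have : (q : ℕ) + 1 ≤ lamPos x y :=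
    Finset.le_sup (f := fun i : Fin n => (i : ℕ) + 1) (by simp [hne])
  omega

theorem exists_apply_ne_lamPos_eq (h : x ≠ y) : ∃ p : Fin n, x p ≠ y p ∧ lamPos x y = p + 1 := by
  obtain ⟨q, hq⟩ := Function.ne_iff.mp h
  obtain ⟨p, hp, hsup⟩ := Finset.exists_mem_eq_sup (Finset.univ.filter fun i : Fin n => x i ≠ y i)
    ⟨q, by simp [hq]⟩ (fun i : Fin n => (i : ℕ) + 1)
  exact ⟨p, by simpa using hp, hsup⟩

theorem sameSuffix.symm {k : ℕ} (h : sameSuffix k x y) : sameSuffix k y x :=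
  fun i hi => (h i hi).symm

/-- `lamPos` is 1-based, so the suffix of length `n + 1 - lamPos x y` starts at the top coordinate
where `x` and `y` differ. -/
theorem not_sameSuffix_lamPos (h : x ≠ y) : ¬ sameSuffix (n + 1 - lamPos x y) x y := by
  obtain ⟨p, hp, hlam⟩ := exists_apply_ne_lamPos_eq h
  have := p.isLt
  exact fun hsuf => hp (hsuf p (by omega))

theorem sameSuffix_of_lamPos_eq (hy : x ≠ y) (h : lamPos x y = lamPos x z) :
    sameSuffix (n + 1 - lamPos x y) y z := by
  obtain ⟨p, hpy, hlamy⟩ := exists_apply_ne_lamPos_eq hy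
  have hz : x ≠ z := by
    rintro rfl
    rw [lamPos_self] at h
    omega
  obtain ⟨p', hpz, hlamz⟩ := exists_apply_ne_lamPos_eq hz
  obtain rfl : p' = p := Fin.ext (by omega)
  intro q hq
  have := p'.isLt
  rcases (show (p' : ℕ) = q ∨ lamPos x y ≤ q by omega) with hpq | hle
  · -- at the top differing position both `y` and `z` carry the bit opposite to `x`
    obtain rfl : p' = q := Fin.ext hpq
    cases hx : x p' <;> simp_all
  · exact (apply_eq_of_lamPos_le hle).symm.trans (apply_eq_of_lamPos_le (h ▸ hle))

end lamPos

theorem branchings_min_forward {n : ℕ}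
    (L : List (Fin n → Bool)) (hgen : IsGenlex L)
    (i : ℕ) (hi : i + 1 < L.length) (β : ℕ)
    (hβ : IsLeast {v | ∃ j, ∃ hj : j < L.length, i < j ∧
      v = lamPos (L.get ⟨i, by omega⟩) (L.get ⟨j, hj⟩)} β)
    (j : ℕ) (hj : j < L.length)
    (hne : L.get ⟨j, hj⟩ ≠ L.get ⟨i, by omega⟩)
    (hlam : lamPos (L.get ⟨i, by omega⟩) (L.get ⟨j, hj⟩) = β) :
    i < j := by
  refine lt_of_not_ge fun hji => ?_
  obtain rfl | hji := hji.eq_or_lt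
  · exact hne rfl
  obtain ⟨m, hm, him, hβm⟩ := hβ.1
  have hjm : sameSuffix (n + 1 - β) (L.get ⟨j, hj⟩) (L.get ⟨m, hm⟩) :=
    hlam ▸ sameSuffix_of_lamPos_eq hne.symm (hlam.trans hβm)
  have hji_suffix := hgen (n + 1 - β) j i m hji.le him.le hm hjm
  exact not_sameSuffix_lamPos hne.symm (hlam ▸ hji_suffix.symm)
end

section
/- For any prefix graph G = (X, E) with X ⊆ {0,1}^n and any vertex x̃ ∈ X, there exists a genlex Hamilton path in G starting at x̃. -/
def IsPrefixGraph : (n : ℕ) → Finset (Fin n → Bool) → ((Fin n → Bool) → (Fin n → Bool) → Prop) → Prop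
  | 0, _, _ => True
  | (n + 1), X, E =>
    (∀ b : Bool,
      IsPrefixGraph n
        ((X.filter (fun x => x (Fin.last n) = b)).image (fun x => fun i : Fin n => x i.castSucc))
        (fun x y => E (Fin.snoc x b) (Fin.snoc y b))) ∧
    (((X.filter (fun x => x (Fin.last n) = false)).Nonempty ∧
      (X.filter (fun x => x (Fin.last n) = true)).Nonempty) →
      ∀ x ∈ X, ∃ y ∈ X, y (Fin.last n) ≠ x (Fin.last n) ∧ E x y)

/-!
Induct on `n`, splitting `X` by the last bit. By induction each nonempty half `X^b` has a genlex
Hamilton path in `G^{b-}` from any prescribed vertex; appending the bit `b` back turns it into a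
genlex path of `X^b` in `G`. Start with the half containing `x̃`; if the other half is nonempty,
condition (p2) gives an edge from the last vertex of this path into it, and a path of the other half
starting at that neighbour completes the Hamilton path. Concatenating the two blocks keeps the
order genlex because the blocks differ in their last bit.
-/

def IsGenlexHamPathFrom {n : ℕ} (X : Finset (Fin n → Bool))
    (E : (Fin n → Bool) → (Fin n → Bool) → Prop) (x₀ : Fin n → Bool)
    (L : List (Fin n → Bool)) : Prop :=
  IsOrdering X L ∧ IsGenlex L ∧ L.IsChain E ∧ L.head? = some x₀

section sameSuffix

variable {n : ℕ}

theorem sameSuffix_zero (x y : Fin n → Bool) : sameSuffix 0 x y :=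
  fun i hi => absurd i.isLt (by omega)

theorem sameSuffix.last_eq {k : ℕ} (hk : 0 < k) {x y : Fin (n + 1) → Bool}
    (h : sameSuffix k x y) : x (Fin.last n) = y (Fin.last n) :=
  h _ (by simp only [Fin.val_last]; omega)

theorem sameSuffix_snoc_snoc_iff {k : ℕ} (hk : 0 < k) (x y : Fin n → Bool) (b c : Bool) :
    sameSuffix k (Fin.snoc x b : Fin (n + 1) → Bool) (Fin.snoc y c) ↔
      b = c ∧ sameSuffix (k - 1) x y := by
  constructor
  · intro h
    refine ⟨by simpa using h.last_eq hk, fun i hi => ?_⟩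
    simpa using h i.castSucc (by simp only [Fin.val_castSucc]; omega)
  · rintro ⟨rfl, h⟩ i hi
    rcases Fin.eq_castSucc_or_eq_last i with ⟨j, rfl⟩ | rfl
    · simpa using h j (by simp only [Fin.val_castSucc] at hi; omega)
    · simp

end sameSuffix

section IsGenlex

variable {n : ℕ}

theorem IsGenlex.map_snoc {L : List (Fin n → Bool)} (h : IsGenlex L) (b : Bool) :
    IsGenlex (L.map (Fin.snoc · b : (Fin n → Bool) → Fin (n + 1) → Bool)) := by
  intro k i j m hij hjm hm hs
  rcases Nat.eq_zero_or_pos k with rfl | hk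
  · exact sameSuffix_zero _ _
  simp only [List.get_eq_getElem, List.getElem_map] at hs ⊢
  rw [sameSuffix_snoc_snoc_iff hk] at hs ⊢
  refine ⟨rfl, ?_⟩
  simpa using h (k - 1) i j m hij hjm (by simpa using hm) (by simpa using hs.2)

theorem IsGenlex.append {A B : List (Fin (n + 1) → Bool)} (hA : IsGenlex A) (hB : IsGenlex B)
    (hAB : ∀ a ∈ A, ∀ b ∈ B, a (Fin.last n) ≠ b (Fin.last n)) : IsGenlex (A ++ B) := by
  intro k i j m hij hjm hm hs
  rcases Nat.eq_zero_or_pos k with rfl | hk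
  · exact sameSuffix_zero _ _
  have hm' : m < A.length + B.length := by simpa using hm
  simp only [List.get_eq_getElem] at hs ⊢
  by_cases hmA : m < A.length
  · simp only [List.getElem_append_left (show i < A.length by omega),
      List.getElem_append_left (show j < A.length by omega), List.getElem_append_left hmA] at hs ⊢
    simpa using hA k i j m hij hjm hmA (by simpa using hs)
  by_cases hiA : i < A.length
  -- a nonempty suffix cannot be shared across the two blocks
  · rw [List.getElem_append_left hiA, List.getElem_append_right (by omega)] at hs
    exact absurd (hs.last_eq hk) (hAB _ (List.getElem_mem _) _ (List.getElem_mem _))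
  · simp only [List.getElem_append_right (show A.length ≤ i by omega),
      List.getElem_append_right (show A.length ≤ j by omega),
      List.getElem_append_right (show A.length ≤ m by omega)] at hs ⊢
    simpa using hB k (i - A.length) (j - A.length) (m - A.length) (by omega) (by omega)
      (by omega) (by simpa using hs)

end IsGenlex

section IsGenlexHamPathFrom

variable {n : ℕ}

theorem isGenlexHamPathFrom_singleton_of_fin_zero {X : Finset (Fin 0 → Bool)}
    (E : (Fin 0 → Bool) → (Fin 0 → Bool) → Prop) {x₀ : Fin 0 → Bool} (hx₀ : x₀ ∈ X) :
    IsGenlexHamPathFrom X E x₀ [x₀] := by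
  refine ⟨⟨List.nodup_singleton _, fun x => ?_⟩, fun _ _ _ _ _ _ _ _ i => i.elim0,
    List.isChain_singleton _, rfl⟩
  rw [Subsingleton.elim x x₀]
  simp [hx₀]

theorem IsGenlexHamPathFrom.ne_nil {X : Finset (Fin n → Bool)}
    {E : (Fin n → Bool) → (Fin n → Bool) → Prop} {x₀ : Fin n → Bool} {L : List (Fin n → Bool)}
    (h : IsGenlexHamPathFrom X E x₀ L) : L ≠ [] := by
  rintro rfl
  simp [IsGenlexHamPathFrom] at h

/-- The hypothesis is about the graph `G^{b-}` for `b = x_n`, as it occurs in `IsPrefixGraph`. -/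
theorem IsGenlexHamPathFrom.map_snoc {X : Finset (Fin (n + 1) → Bool)}
    {E : (Fin (n + 1) → Bool) → (Fin (n + 1) → Bool) → Prop} {x : Fin (n + 1) → Bool}
    {L : List (Fin n → Bool)}
    (h : IsGenlexHamPathFrom ((X.filter (fun z => z (Fin.last n) = x (Fin.last n))).image
        (fun z i => z i.castSucc)) (fun u v => E (Fin.snoc u (x (Fin.last n)))
          (Fin.snoc v (x (Fin.last n)))) (Fin.init x) L) :
    IsGenlexHamPathFrom (X.filter (fun z => z (Fin.last n) = x (Fin.last n))) E x
      (L.map (Fin.snoc · (x (Fin.last n)))) := by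
  obtain ⟨⟨hnd, hmem⟩, hgen, hchain, hhead⟩ := h
  have snoc_init : ∀ z : Fin (n + 1) → Bool, z (Fin.last n) = x (Fin.last n) →
      Fin.snoc (fun i : Fin n => z i.castSucc) (x (Fin.last n)) = z :=
    fun z hz => hz ▸ Fin.snoc_init_self z
  refine ⟨⟨hnd.map fun u v huv => by simpa using congrArg Fin.init huv, fun w => ?_⟩,
    hgen.map_snoc _, (List.isChain_map _).2 hchain, by simp [hhead]⟩
  simp only [List.mem_map, hmem, Finset.mem_image]
  constructor
  · rintro ⟨_, ⟨z, hz, rfl⟩, rfl⟩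
    rwa [snoc_init z (Finset.mem_filter.1 hz).2]
  · exact fun hw => ⟨_, ⟨w, hw, rfl⟩, snoc_init w (Finset.mem_filter.1 hw).2⟩

theorem IsGenlexHamPathFrom.append {X : Finset (Fin (n + 1) → Bool)}
    {E : (Fin (n + 1) → Bool) → (Fin (n + 1) → Bool) → Prop} {x y : Fin (n + 1) → Bool}
    {A B : List (Fin (n + 1) → Bool)}
    (hA : IsGenlexHamPathFrom (X.filter (fun z => z (Fin.last n) = x (Fin.last n))) E x A)
    (hB : IsGenlexHamPathFrom (X.filter (fun z => z (Fin.last n) = y (Fin.last n))) E y B)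
    (hxy : y (Fin.last n) ≠ x (Fin.last n)) (hE : E (A.getLast hA.ne_nil) y) :
    IsGenlexHamPathFrom X E x (A ++ B) := by
  have hAne := hA.ne_nil
  obtain ⟨⟨hAnd, hAmem⟩, hAgen, hAchain, hAhead⟩ := hA
  obtain ⟨⟨hBnd, hBmem⟩, hBgen, hBchain, hBhead⟩ := hB
  have hAB : ∀ a ∈ A, ∀ b ∈ B, a (Fin.last n) ≠ b (Fin.last n) := by
    intro a ha b hb
    rw [(Finset.mem_filter.1 ((hAmem a).1 ha)).2, (Finset.mem_filter.1 ((hBmem b).1 hb)).2]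
    exact hxy.symm
  refine ⟨⟨hAnd.append hBnd fun a ha hb => hAB a ha a hb rfl, fun w => ?_⟩,
    hAgen.append hBgen hAB, hAchain.append hBchain ?_, ?_⟩
  · simp only [List.mem_append, hAmem, hBmem, Finset.mem_filter]
    constructor
    · rintro (⟨hw, -⟩ | ⟨hw, -⟩) <;> exact hw
    · intro hw
      by_cases hwx : w (Fin.last n) = x (Fin.last n)
      · exact .inl ⟨hw, hwx⟩
      · exact .inr ⟨hw, (Bool.eq_not_iff.2 hwx).trans (Bool.eq_not_iff.2 hxy).symm⟩
  · simpa [List.getLast?_eq_some_getLast hAne, hBhead] using hE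
  · cases A with
    | nil => simp at hAhead
    | cons a A => simpa using hAhead

end IsGenlexHamPathFrom

theorem Finset.filter_nonempty_false_and_true {α : Type*} {s : Finset α} {f : α → Bool}
    {x y : α} (hx : x ∈ s) (hy : y ∈ s) (hxy : f x ≠ f y) :
    (s.filter (f · = false)).Nonempty ∧ (s.filter (f · = true)).Nonempty := by
  cases hfx : f x <;> cases hfy : f y <;> simp_all only [ne_eq, not_true_eq_false]
  · exact ⟨⟨x, Finset.mem_filter.2 ⟨hx, hfx⟩⟩, ⟨y, Finset.mem_filter.2 ⟨hy, hfy⟩⟩⟩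
  · exact ⟨⟨y, Finset.mem_filter.2 ⟨hy, hfy⟩⟩, ⟨x, Finset.mem_filter.2 ⟨hx, hfx⟩⟩⟩

theorem prefix_graph_genlex_hamPath {n : ℕ} (X : Finset (Fin n → Bool))
    (E : (Fin n → Bool) → (Fin n → Bool) → Prop)
    (hpre : IsPrefixGraph n X E) (x0 : Fin n → Bool) (hx0 : x0 ∈ X) :
    ∃ L : List (Fin n → Bool),
      IsOrdering X L ∧ IsGenlex L ∧ L.Chain' E ∧ L.head? = some x0 := by
  induction n with
  | zero => exact ⟨[x0], isGenlexHamPathFrom_singleton_of_fin_zero E hx0⟩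
  | succ n ih =>
    obtain ⟨hslices, hcross⟩ := hpre
    have half : ∀ x ∈ X, ∃ A,
        IsGenlexHamPathFrom (X.filter (fun z => z (Fin.last n) = x (Fin.last n))) E x A := by
      intro x hx
      obtain ⟨L, hL⟩ := ih _ _ (hslices _) (Fin.init x)
        (Finset.mem_image_of_mem _ (Finset.mem_filter.2 ⟨hx, rfl⟩))
      exact ⟨_, IsGenlexHamPathFrom.map_snoc hL⟩
    obtain ⟨A, hA⟩ := half x0 hx0
    by_cases hother : ∃ y ∈ X, y (Fin.last n) ≠ x0 (Fin.last n)
    · obtain ⟨y₁, hy₁, hy₁x0⟩ := hother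
      obtain ⟨hzX, hzx0⟩ := Finset.mem_filter.1 ((hA.1.2 _).1 (A.getLast_mem hA.ne_nil))
      obtain ⟨y, hy, hyz, hE⟩ :=
        hcross (Finset.filter_nonempty_false_and_true hy₁ hx0 hy₁x0) _ hzX
      obtain ⟨B, hB⟩ := half y hy
      have hyx0 : y (Fin.last n) ≠ x0 (Fin.last n) := hzx0 ▸ hyz
      exact ⟨A ++ B, hA.append hB hyx0 hE⟩
    · push Not at hother
      exact ⟨A, Finset.filter_true_of_mem hother ▸ hA⟩
end

section
/- Let P = conv(X) be a 0/1-polytope with vertex set X ⊆ {0,1}^n such that X^0 and X^1 are both nonempty (where X^b are vertices with last coordinate b). Fix b ∈ {0,1} and a vertex x ∈ X^b. If y ∈ X^{1-b} minimizes the Hamming distance d(x,y) among all vertices in X^{1-b}, then the segment conv({x,y}) is an edge of P. -/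
noncomputable def toVec {n : ℕ} (x : Fin n → Bool) : Fin n → ℝ := fun i => if x i then 1 else 0

def IsPolyEdge {n : ℕ} (X : Finset (Fin n → Bool)) (x y : Fin n → Bool) : Prop :=
  x ≠ y ∧ ∀ ν : ℝ, 0 < ν → ν < 1 →
    (ν • toVec x + (1 - ν) • toVec y) ∉
      convexHull ℝ (toVec '' (((X.erase x).erase y : Finset (Fin n → Bool)) : Set (Fin n → Bool)))

/-! If `ν • x + (1 - ν) • y` (with `ν < 1`) were a convex combination of the other vertices, the
coordinates in which `x` and `y` agree would be tight cube inequalities at that point, so every vertex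
carrying positive weight lies on the smallest face of the cube containing `x` and `y`. Some of them
must differ from `x` in the last coordinate, and such a vertex `z` is at Hamming distance at most
`d(x, y)` from `x`; minimality of `y` then forces `z = y`. -/

open Finset

theorem mem_convexHull_sep_eq_of_le {𝕜 E κ : Type*} [Field 𝕜] [LinearOrder 𝕜]
    [IsStrictOrderedRing 𝕜] [AddCommGroup E] [Module 𝕜 E] (f : κ → E →ₗ[𝕜] 𝕜) (c : κ → 𝕜)
    {s : Set E} {p : E} (hs : ∀ v ∈ s, ∀ k, f k v ≤ c k) (hp : p ∈ convexHull 𝕜 s)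
    (hfp : ∀ k, c k ≤ f k p) : p ∈ convexHull 𝕜 {v ∈ s | ∀ k, f k v = c k} := by
  classical
  obtain ⟨ι, _, w, z, hw₀, hw₁, hz, rfl⟩ := mem_convexHull_iff_exists_fintype.mp hp
  have htight : ∀ i, w i ≠ 0 → ∀ k, f k (z i) = c k := by
    intro i hi k
    have hslack_nonneg : ∀ j ∈ univ, 0 ≤ w j * (c k - f k (z j)) :=
      fun j _ => mul_nonneg (hw₀ j) (sub_nonneg.2 (hs _ (hz j) k))
    have hslack : ∑ j, w j * (c k - f k (z j)) = 0 := by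
      refine le_antisymm ?_ (sum_nonneg hslack_nonneg)
      simp only [mul_sub, sum_sub_distrib, ← sum_mul, hw₁, one_mul, map_sum, map_smul,
        smul_eq_mul] at hfp ⊢
      linarith [hfp k]
    have := (sum_eq_zero_iff_of_nonneg hslack_nonneg).1 hslack i (mem_univ i)
    exact (sub_eq_zero.1 ((mul_eq_zero.1 this).resolve_left hi)).symm
  rw [← centerMass_eq_of_sum_1 _ _ hw₁, ← centerMass_filter_ne_zero]
  exact centerMass_mem_convexHull _ (fun i _ => hw₀ i)
    (by rw [sum_filter_ne_zero, hw₁]; exact one_pos) fun i hi => ⟨hz i, htight i (mem_filter.1 hi).2⟩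

/-- The facet inequality `±v i ≤ toVec x i` of the unit cube through the vertex `x`. -/
noncomputable def cubeFacet {m : ℕ} (x : Fin m → Bool) (i : Fin m) : (Fin m → ℝ) →ₗ[ℝ] ℝ :=
  (2 * toVec x i - 1) • LinearMap.proj i

theorem cubeFacet_apply {m : ℕ} (x : Fin m → Bool) (i : Fin m) (v : Fin m → ℝ) :
    cubeFacet x i v = (2 * toVec x i - 1) * v i := rfl

theorem cubeFacet_toVec_le {m : ℕ} (x z : Fin m → Bool) (i : Fin m) :
    cubeFacet x i (toVec z) ≤ toVec x i := by
  rw [cubeFacet_apply]; unfold toVec; cases x i <;> cases z i <;> norm_num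

theorem cubeFacet_toVec_eq_iff {m : ℕ} (x z : Fin m → Bool) (i : Fin m) :
    cubeFacet x i (toVec z) = toVec x i ↔ z i = x i := by
  rw [cubeFacet_apply]; unfold toVec; cases x i <;> cases z i <;> norm_num

theorem cubeFacet_smul_add_smul_of_eq {m : ℕ} (x y : Fin m → Bool) (i : Fin m) (h : x i = y i) (ν : ℝ) :
    cubeFacet x i (ν • toVec x + (1 - ν) • toVec y) = toVec x i := by
  rw [cubeFacet_apply]; unfold toVec; simp only [Pi.add_apply, Pi.smul_apply, smul_eq_mul, h]
  cases y i <;> norm_num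

theorem exists_agree_of_mem_convexHull {m : ℕ} {S : Set (Fin m → Bool)} {x y : Fin m → Bool}
    {ν : ℝ} (hν : ν ≠ 1) (hp : ν • toVec x + (1 - ν) • toVec y ∈ convexHull ℝ (toVec '' S))
    {j : Fin m} (hj : x j ≠ y j) : ∃ z ∈ S, (∀ i, x i = y i → z i = x i) ∧ z j ≠ x j := by
  have hface := mem_convexHull_sep_eq_of_le (fun k : {i // x i = y i} => cubeFacet x k)
    (fun k => toVec x k) (by rintro _ ⟨z, -, rfl⟩ k; exact cubeFacet_toVec_le x z k) hp
    fun k => (cubeFacet_smul_add_smul_of_eq x y k k.2 ν).ge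
  by_contra! hnone
  have hsub : {v ∈ toVec '' S | ∀ k : {i // x i = y i}, cubeFacet x k v = toVec x k} ⊆
      {v | v j = toVec x j} := by
    rintro _ ⟨⟨z, hz, rfl⟩, htight⟩
    simp only [Set.mem_ofPred_eq, toVec,
      hnone z hz fun i hi => (cubeFacet_toVec_eq_iff x z i).1 (htight ⟨i, hi⟩)]
  have hpj : ν * toVec x j + (1 - ν) * toVec y j = toVec x j :=
    (convex_hyperplane (LinearMap.proj (R := ℝ) j).isLinear _).convexHull_subset_iff.2 hsub hface
  apply hν
  unfold toVec at hpj
  cases hx : x j <;> cases hy : y j <;> simp [hx, hy] at hj hpj <;> linarith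

theorem eq_of_agree_of_hamming_le {m : ℕ} {x y z : Fin m → Bool}
    (hagree : ∀ i, x i = y i → z i = x i) (hle : hamming x y ≤ hamming x z) : z = y := by
  have hsub : univ.filter (fun i => x i ≠ z i) ⊆ univ.filter (fun i => x i ≠ y i) := by
    intro i
    simp only [mem_filter, mem_univ, true_and]
    exact fun hxz hxy => hxz (hagree i hxy).symm
  have hdiff := eq_of_subset_of_card_le hsub hle
  funext i
  by_cases hxy : x i = y i
  · rw [hagree i hxy, hxy]
  · have hxz : x i ≠ z i := by
      have hi : i ∈ univ.filter (fun i => x i ≠ y i) := mem_filter.2 ⟨mem_univ i, hxy⟩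
      rw [← hdiff] at hi
      exact (mem_filter.1 hi).2
    rw [Bool.eq_not.2 (Ne.symm hxz), Bool.eq_not.2 (Ne.symm hxy)]

theorem min_hamming_is_edge_general {n : ℕ} (X : Finset (Fin (n + 1) → Bool))
    (b : Bool) (x : Fin (n + 1) → Bool) (hxb : x (Fin.last n) = b)
    (y : Fin (n + 1) → Bool) (hyb : y (Fin.last n) = !b)
    (hmin : ∀ z ∈ X, z (Fin.last n) = !b → hamming x y ≤ hamming x z) :
    IsPolyEdge X x y := by
  have hlast : x (Fin.last n) ≠ y (Fin.last n) := by simp [hxb, hyb]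
  refine ⟨fun h => hlast (congrFun h _), fun ν _ hν1 hp => ?_⟩
  obtain ⟨z, hzS, hagree, hzlast⟩ := exists_agree_of_mem_convexHull hν1.ne hp hlast
  simp only [coe_erase, Set.mem_sdiff, mem_coe, Set.mem_singleton_iff] at hzS
  obtain ⟨⟨hzX, -⟩, hzy⟩ := hzS
  have hzb : z (Fin.last n) = !b := Bool.eq_not.2 (hxb ▸ hzlast)
  exact hzy (eq_of_agree_of_hamming_le hagree (hmin z hzX hzb))

theorem min_hamming_is_edge {n : ℕ} (X : Finset (Fin (n + 1) → Bool))
    (h0 : (X.filter (fun x => x (Fin.last n) = false)).Nonempty)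
    (h1 : (X.filter (fun x => x (Fin.last n) = true)).Nonempty)
    (b : Bool) (x : Fin (n + 1) → Bool) (hx : x ∈ X) (hxb : x (Fin.last n) = b)
    (y : Fin (n + 1) → Bool) (hy : y ∈ X) (hyb : y (Fin.last n) = !b)
    (hmin : ∀ z ∈ X, z (Fin.last n) = !b → hamming x y ≤ hamming x z) :
    IsPolyEdge X x y :=
  min_hamming_is_edge_general X b x hxb y hyb hmin
end

section
/- The skeleton of any 0/1-polytope is a prefix graph. That is, for any X ⊆ {0,1}^n, the graph G = (X, E) where E consists of the pairs of vertices joined by an edge of conv(X) is a prefix graph. -/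
/-!
Induction on `n`. The slices `sliceLast X b` are the faces of `conv X` cut out by the facets
`x (Fin.last n) = b` of the cube, so their edges are edges of `conv X` and the induction hypothesis
applies to them. For the neighbour condition, run one step of the simplex method at a vertex `x`:
project the other vertices radially from `x` onto the hyperplane `ℓ (v - x) = 1`, where on
0/1-points `ℓ (v - x)` is the Hamming distance to `x`. Every extreme point of this vertex figure
comes from a neighbour of `x`, and since the vertex figure is the convex hull of its extreme points
(Krein–Milman), if some vertex differs from `x` in the last bit, so does some neighbour.
-/

open Set

section ConvexGeometry

variable {E : Type*} [AddCommGroup E] [Module ℝ E]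

theorem Set.Finite.convexHull_extremePoints_convexHull [TopologicalSpace E] [T2Space E]
    [IsTopologicalAddGroup E] [ContinuousSMul ℝ E] [LocallyConvexSpace ℝ E]
    {S : Set E} (hS : S.Finite) :
    convexHull ℝ ((convexHull ℝ S).extremePoints ℝ) = convexHull ℝ S := by
  have hext : ((convexHull ℝ S).extremePoints ℝ).Finite :=
    hS.subset extremePoints_convexHull_subset
  rw [← (hext.isClosed_convexHull ℝ).closure_eq]
  exact closure_convexHull_extremePoints (hS.isCompact_convexHull ℝ) (convex_convexHull ℝ S)

theorem exists_mem_extremePoints_convexHull_apply_ne [TopologicalSpace E] [T2Space E]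
    [IsTopologicalAddGroup E] [ContinuousSMul ℝ E] [LocallyConvexSpace ℝ E]
    {S : Set E} (hS : S.Finite) (g : E →ₗ[ℝ] ℝ) {c : ℝ} {s : E} (hs : s ∈ S)
    (hgs : g s ≠ c) :
    ∃ e ∈ (convexHull ℝ S).extremePoints ℝ, g e ≠ c := by
  by_contra! h
  have hsub : convexHull ℝ S ⊆ {v | g v = c} := by
    rw [← hS.convexHull_extremePoints_convexHull]
    exact convexHull_min h (convex_hyperplane g.isLinear c)
  exact hgs (hsub (subset_convexHull ℝ S hs))

theorem mem_convexHull_sep_of_apply_eq {S : Set E} {g : E →ₗ[ℝ] ℝ} {c : ℝ}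
    (hS : ∀ s ∈ S, g s ≤ c) {p : E} (hp : p ∈ convexHull ℝ S) (hgp : g p = c) :
    p ∈ convexHull ℝ {s ∈ S | g s = c} := by
  -- The open half-space `g < c` together with the hull of the face is convex and contains `S`.
  set C := {v | g v < c} ∪ convexHull ℝ {s ∈ S | g s = c}
  have hle : ∀ v ∈ C, g v ≤ c := by
    rintro v (hv | hv)
    · exact hv.le
    · exact (convexHull_min (fun s hs => hs.2) (convex_hyperplane g.isLinear c) hv).le
  have hC : Convex ℝ C := by
    intro u hu v hv a b ha hb hab
    rcases ha.eq_or_lt with rfl | ha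
    · obtain rfl : b = 1 := by linarith
      simpa using hv
    rcases hb.eq_or_lt with rfl | hb
    · obtain rfl : a = 1 := by linarith
      simpa using hu
    have hlt : g u < c ∨ g v < c → g (a • u + b • v) < c := by
      rw [map_add, map_smul, map_smul, smul_eq_mul, smul_eq_mul]
      have hc : a * c + b * c = c := by rw [← add_mul, hab, one_mul]
      rintro (h | h)
      · nlinarith [mul_lt_mul_of_pos_left h ha, mul_le_mul_of_nonneg_left (hle v hv) hb.le]
      · nlinarith [mul_le_mul_of_nonneg_left (hle u hu) ha.le, mul_lt_mul_of_pos_left h hb]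
    rcases hu with hu | hu
    · exact Or.inl (hlt (Or.inl hu))
    rcases hv with hv | hv
    · exact Or.inl (hlt (Or.inr hv))
    exact Or.inr (convex_convexHull ℝ _ hu hv ha.le hb.le hab)
  have hSC : S ⊆ C := fun s hs =>
    (hS s hs).lt_or_eq.elim Or.inl fun h => Or.inr (subset_convexHull ℝ _ ⟨hs, h⟩)
  exact (convexHull_min hSC hC hp).resolve_left hgp.not_lt

end ConvexGeometry

section RadialProjection

variable {E : Type*} [AddCommGroup E] [Module ℝ E] (ℓ : E →ₗ[ℝ] ℝ) (x : E)

/-- Applied to the other vertices of a polytope, this yields the vertex figure at its vertex `x`. -/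
noncomputable def radialProjection (v : E) : E := x + (ℓ (v - x))⁻¹ • (v - x)

theorem radialProjection_add_smul {c : ℝ} (hc : c ≠ 0) (v : E) :
    radialProjection ℓ x (x + c • (v - x)) = radialProjection ℓ x v := by
  simp [radialProjection, smul_smul, hc]

theorem apply_radialProjection_sub (g : E →ₗ[ℝ] ℝ) (v : E) :
    g (radialProjection ℓ x v) - g x = (ℓ (v - x))⁻¹ * (g v - g x) := by
  simp [radialProjection]

theorem convex_setOf_radialProjection_mem {C : Set E} (hC : Convex ℝ C) :
    Convex ℝ {v | 0 < ℓ (v - x) ∧ radialProjection ℓ x v ∈ C} := by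
  rintro u ⟨hu, huC⟩ v ⟨hv, hvC⟩ a b ha hb hab
  have hsub : a • u + b • v - x = a • (u - x) + b • (v - x) := by
    conv_lhs => rw [← one_smul ℝ x, ← hab]
    module
  have hD : 0 < a * ℓ (u - x) + b * ℓ (v - x) := by
    rcases ha.eq_or_lt with rfl | ha
    · obtain rfl : b = 1 := by linarith
      simpa using hv
    · positivity
  refine ⟨by simpa [hsub] using hD, ?_⟩
  have key : radialProjection ℓ x (a • u + b • v) =
      (a * ℓ (u - x) / (a * ℓ (u - x) + b * ℓ (v - x))) • radialProjection ℓ x u +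
      (b * ℓ (v - x) / (a * ℓ (u - x) + b * ℓ (v - x))) • radialProjection ℓ x v := by
    simp only [radialProjection, hsub, map_add, map_smul, smul_eq_mul]
    match_scalars <;> field_simp
    ring
  rw [key]
  refine hC huC hvC (by positivity) (by positivity) ?_
  rw [← add_div, div_self hD.ne']

theorem radialProjection_mem_convexHull_image {T : Set E} (hT : ∀ t ∈ T, 0 < ℓ (t - x))
    {p : E} (hp : p ∈ convexHull ℝ T) :
    radialProjection ℓ x p ∈ convexHull ℝ (radialProjection ℓ x '' T) := by
  have hT' : T ⊆ {v | 0 < ℓ (v - x) ∧ radialProjection ℓ x v ∈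
      convexHull ℝ (radialProjection ℓ x '' T)} :=
    fun t ht => ⟨hT t ht, subset_convexHull ℝ _ (mem_image_of_mem _ ht)⟩
  exact (convexHull_min hT' (convex_setOf_radialProjection_mem ℓ x (convex_convexHull ℝ _)) hp).2

theorem sub_eq_smul_of_radialProjection_eq {u v : E}
    (h : radialProjection ℓ x u = radialProjection ℓ x v) (hv : ℓ (v - x) ≠ 0) :
    v - x = (ℓ (v - x) / ℓ (u - x)) • (u - x) := by
  rw [div_eq_mul_inv, mul_smul, add_left_cancel h, smul_inv_smul₀ hv]

theorem segment_notMem_convexHull_sdiff_of_mem_extremePoints {V : Set E}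
    (hV : ∀ v ∈ V, 0 < ℓ (v - x)) (hinj : InjOn (radialProjection ℓ x) V) {y : E} (hy : y ∈ V)
    (hext : radialProjection ℓ x y ∈ (convexHull ℝ (radialProjection ℓ x '' V)).extremePoints ℝ)
    {ν : ℝ} (hν : ν < 1) :
    ν • x + (1 - ν) • y ∉ convexHull ℝ (V \ {y}) := by
  intro hp
  have hproj : radialProjection ℓ x (ν • x + (1 - ν) • y) = radialProjection ℓ x y := by
    rw [show ν • x + (1 - ν) • y = x + (1 - ν) • (y - x) by module]
    exact radialProjection_add_smul ℓ x (sub_ne_zero.2 hν.ne') y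
  have hmem := radialProjection_mem_convexHull_image ℓ x (fun t ht => hV t ht.1) hp
  rw [hproj] at hmem
  have hsub : radialProjection ℓ x '' (V \ {y}) ⊆
      convexHull ℝ (radialProjection ℓ x '' V) \ {radialProjection ℓ x y} := by
    rintro _ ⟨t, ⟨htV, hty⟩, rfl⟩
    exact ⟨subset_convexHull ℝ _ (mem_image_of_mem _ htV), fun h => hty (hinj htV hy h)⟩
  exact ((convex_convexHull ℝ _).mem_extremePoints_iff_mem_sdiff_convexHull_sdiff.1 hext).2
    (convexHull_mono hsub hmem)

/-- The simplex-method step; the last conjunct says that `[x, y]` is an edge of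
`convexHull ℝ (insert x V)`. -/
theorem exists_edge_apply_ne [TopologicalSpace E] [T2Space E] [IsTopologicalAddGroup E]
    [ContinuousSMul ℝ E] [LocallyConvexSpace ℝ E] {V : Set E} (hVfin : V.Finite)
    (hV : ∀ v ∈ V, 0 < ℓ (v - x)) (hinj : InjOn (radialProjection ℓ x) V)
    (g : E →ₗ[ℝ] ℝ) {w : E} (hw : w ∈ V) (hgw : g w ≠ g x) :
    ∃ y ∈ V, g y ≠ g x ∧ ∀ ν : ℝ, ν < 1 → ν • x + (1 - ν) • y ∉ convexHull ℝ (V \ {y}) := by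
  have hgw' : g (radialProjection ℓ x w) ≠ g x := by
    rw [← sub_ne_zero, apply_radialProjection_sub]
    exact mul_ne_zero (inv_ne_zero (hV w hw).ne') (sub_ne_zero.2 hgw)
  obtain ⟨e, he, hge⟩ := exists_mem_extremePoints_convexHull_apply_ne (hVfin.image _) g
    (mem_image_of_mem _ hw) hgw'
  obtain ⟨y, hy, rfl⟩ := extremePoints_convexHull_subset he
  refine ⟨y, hy, fun hgy => hge ?_, fun ν hν =>
    segment_notMem_convexHull_sdiff_of_mem_extremePoints ℓ x hV hinj hy he hν⟩
  rw [← sub_eq_zero, apply_radialProjection_sub, hgy, sub_self, mul_zero]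

end RadialProjection

section Cube

variable {m : ℕ}

theorem toVec_apply_inj {x y : Fin m → Bool} {i : Fin m} :
    toVec x i = toVec y i ↔ x i = y i := by
  unfold toVec
  cases x i <;> cases y i <;> norm_num

theorem toVec_injective : Function.Injective (toVec (n := m)) :=
  fun _ _ h => funext fun i => toVec_apply_inj.1 (congrFun h i)

noncomputable def hammingFunctional (x : Fin m → Bool) : (Fin m → ℝ) →ₗ[ℝ] ℝ :=
  ∑ i, (if x i then (-1 : ℝ) else 1) • LinearMap.proj i

theorem hammingFunctional_toVec_sub (x z : Fin m → Bool) :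
    hammingFunctional x (toVec z - toVec x) = hamming x z := by
  simp only [hammingFunctional, hamming, LinearMap.sum_apply, LinearMap.smul_apply,
    LinearMap.proj_apply, Pi.sub_apply, smul_eq_mul, Finset.card_filter, Nat.cast_sum]
  refine Finset.sum_congr rfl fun i _ => ?_
  unfold toVec
  cases x i <;> cases z i <;> norm_num

theorem hamming_pos {x z : Fin m → Bool} (h : x ≠ z) : 0 < hamming x z := by
  obtain ⟨i, hi⟩ := Function.ne_iff.1 h
  exact Finset.card_pos.2 ⟨i, Finset.mem_filter.2 ⟨Finset.mem_univ i, hi⟩⟩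

theorem hammingFunctional_toVec_sub_pos {x z : Fin m → Bool} (h : z ≠ x) :
    0 < hammingFunctional x (toVec z - toVec x) := by
  rw [hammingFunctional_toVec_sub]
  exact_mod_cast hamming_pos h.symm

theorem eq_of_toVec_sub_eq_smul {x y z : Fin m → Bool} (hxy : x ≠ y) {c : ℝ} (hc : c ≠ 0)
    (h : toVec z - toVec x = c • (toVec y - toVec x)) : z = y := by
  obtain ⟨i, hi⟩ := Function.ne_iff.1 hxy
  have hc1 : c = 1 := by
    have hi' := congrFun h i
    simp only [toVec, Pi.sub_apply, Pi.smul_apply, smul_eq_mul] at hi'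
    cases hx : x i <;> cases hy : y i <;> cases hz : z i <;> simp_all
  rw [hc1, one_smul, sub_left_inj] at h
  exact toVec_injective h

theorem injOn_radialProjection_toVec (x : Fin m → Bool) :
    InjOn (radialProjection (hammingFunctional x) (toVec x)) (toVec '' {z | z ≠ x}) := by
  rintro _ ⟨u, hu, rfl⟩ _ ⟨v, hv, rfl⟩ h
  have hvu := sub_eq_smul_of_radialProjection_eq _ _ h (hammingFunctional_toVec_sub_pos hv).ne'
  rw [eq_of_toVec_sub_eq_smul (Ne.symm hu) (div_pos (hammingFunctional_toVec_sub_pos hv)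
    (hammingFunctional_toVec_sub_pos hu)).ne' hvu]

theorem exists_isPolyEdge_apply_ne (X : Finset (Fin m → Bool)) (i : Fin m)
    {x w : Fin m → Bool} (hw : w ∈ X) (hwx : w i ≠ x i) :
    ∃ y ∈ X, y i ≠ x i ∧ IsPolyEdge X x y := by
  set V := toVec '' ((X.erase x : Finset (Fin m → Bool)) : Set (Fin m → Bool))
  have hV : ∀ v ∈ V, 0 < hammingFunctional x (v - toVec x) := by
    rintro _ ⟨z, hz, rfl⟩
    exact hammingFunctional_toVec_sub_pos (Finset.ne_of_mem_erase hz)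
  have hinj : InjOn (radialProjection (hammingFunctional x) (toVec x)) V :=
    (injOn_radialProjection_toVec x).mono (image_mono fun z hz => Finset.ne_of_mem_erase hz)
  have hwV : toVec w ∈ V :=
    mem_image_of_mem _ (Finset.mem_erase.2 ⟨fun h => hwx (h ▸ rfl), hw⟩)
  obtain ⟨_, ⟨y, hy, rfl⟩, hyx, hedge⟩ :=
    exists_edge_apply_ne (hammingFunctional x) (toVec x) ((X.erase x).finite_toSet.image _)
      hV hinj (LinearMap.proj i) hwV (mt toVec_apply_inj.1 hwx)
  refine ⟨y, Finset.mem_of_mem_erase hy, mt toVec_apply_inj.2 hyx,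
    (Finset.ne_of_mem_erase hy).symm, fun ν _ hν => ?_⟩
  rw [Finset.coe_erase, image_sdiff toVec_injective, image_singleton]
  exact hedge ν hν

theorem mem_convexHull_toVec_sep {T : Set (Fin m → Bool)} {i : Fin m} {b : Bool}
    {p : Fin m → ℝ} (hp : p ∈ convexHull ℝ (toVec '' T)) (hpi : p i = if b then 1 else 0) :
    p ∈ convexHull ℝ (toVec '' {z ∈ T | z i = b}) := by
  have hface : p ∈ convexHull ℝ {s ∈ toVec '' T | s i = if b then 1 else 0} := by
    cases b
    · simpa using mem_convexHull_sep_of_apply_eq (g := -LinearMap.proj i) (c := 0)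
        (by rintro _ ⟨z, -, rfl⟩; by_cases hz : z i <;> simp [toVec, hz]) hp (by simpa using hpi)
    · simpa using mem_convexHull_sep_of_apply_eq (g := LinearMap.proj i) (c := 1)
        (by rintro _ ⟨z, -, rfl⟩; by_cases hz : z i <;> simp [toVec, hz]) hp (by simpa using hpi)
  refine convexHull_mono ?_ hface
  rintro _ ⟨⟨z, hz, rfl⟩, hzi⟩
  exact ⟨z, ⟨hz, by cases b <;> simpa [toVec] using hzi⟩, rfl⟩

end Cube

section Slice

variable {n : ℕ}

/-- The vertex set `X^{b-}` of the paper. -/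
def sliceLast (X : Finset (Fin (n + 1) → Bool)) (b : Bool) : Finset (Fin n → Bool) :=
  (X.filter (fun x => x (Fin.last n) = b)).image Fin.init

theorem mem_sliceLast {X : Finset (Fin (n + 1) → Bool)} {b : Bool} {x : Fin n → Bool} :
    x ∈ sliceLast X b ↔ Fin.snoc x b ∈ X := by
  simp only [sliceLast, Finset.mem_image, Finset.mem_filter]
  constructor
  · rintro ⟨z, ⟨hz, rfl⟩, rfl⟩
    rwa [Fin.snoc_init_self]
  · exact fun h => ⟨_, ⟨h, Fin.snoc_last _ _⟩, Fin.init_snoc _ _⟩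

/-- `conv (sliceLast X b)` is a face of `conv X`, and edges of a face are edges. -/
theorem IsPolyEdge.snoc {X : Finset (Fin (n + 1) → Bool)} {b : Bool} {x y : Fin n → Bool}
    (h : IsPolyEdge (sliceLast X b) x y) : IsPolyEdge X (Fin.snoc x b) (Fin.snoc y b) := by
  obtain ⟨hne, hsep⟩ := h
  refine ⟨fun hxy => hne (by simpa using congrArg Fin.init hxy),
    fun ν hν0 hν1 hp => hsep ν hν0 hν1 ?_⟩
  have hface := mem_convexHull_toVec_sep (i := Fin.last n) (b := b) hp
    (by cases b <;> simp [toVec])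
  have hinit := (LinearMap.funLeft ℝ ℝ Fin.castSucc).image_convexHull _ ▸
    mem_image_of_mem _ hface
  convert convexHull_mono ?_ hinit using 1
  · ext i
    simp [LinearMap.funLeft, toVec]
  · rintro _ ⟨_, ⟨z, ⟨hzF, hzb⟩, rfl⟩, rfl⟩
    have hz : Fin.snoc (Fin.init z) b = z := hzb ▸ Fin.snoc_init_self z
    refine ⟨Fin.init z, ?_, rfl⟩
    simp only [Finset.coe_erase, mem_sdiff, mem_singleton_iff, Finset.mem_coe] at hzF ⊢
    refine ⟨⟨mem_sliceLast.2 (by rw [hz]; exact hzF.1.1), ?_⟩, ?_⟩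
    · exact fun h => hzF.1.2 (by rw [← hz, h])
    · exact fun h => hzF.2 (by rw [← hz, h])

theorem IsPrefixGraph.mono {X : Finset (Fin n → Bool)}
    {E E' : (Fin n → Bool) → (Fin n → Bool) → Prop}
    (h : ∀ x ∈ X, ∀ y ∈ X, E x y → E' x y) (hE : IsPrefixGraph n X E) :
    IsPrefixGraph n X E' := by
  induction n with
  | zero => trivial
  | succ n ih =>
    obtain ⟨hslice, hadj⟩ := hE
    refine ⟨fun b => ih (fun x hx y hy => h _ (mem_sliceLast.1 hx) _ (mem_sliceLast.1 hy))
      (hslice b), fun hne x hx => ?_⟩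
    obtain ⟨y, hy, hyx, hxy⟩ := hadj hne x hx
    exact ⟨y, hy, hyx, h x hx y hy hxy⟩

end Slice

theorem skeleton_is_prefix_graph (n : ℕ) (X : Finset (Fin n → Bool)) :
    IsPrefixGraph n X (IsPolyEdge X) := by
  induction n with
  | zero => trivial
  | succ n ih =>
    refine ⟨fun b => (ih (sliceLast X b)).mono fun _ _ _ _ => IsPolyEdge.snoc, ?_⟩
    rintro ⟨⟨w₀, hw₀⟩, ⟨w₁, hw₁⟩⟩ x -
    rw [Finset.mem_filter] at hw₀ hw₁
    obtain ⟨w, hw, hwx⟩ : ∃ w ∈ X, w (Fin.last n) ≠ x (Fin.last n) := by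
      cases x (Fin.last n)
      · exact ⟨w₁, hw₁.1, by simp [hw₁.2]⟩
      · exact ⟨w₀, hw₀.1, by simp [hw₀.2]⟩
    exact exists_isPolyEdge_apply_ne X (Fin.last n) hw hwx
end

section
/- Let X ⊆ {0,1}^n, x ∈ X, let I ⊆ [n] be an interval, and α ∈ I. Define w ∈ {−1,0,+1}^n by w_i = −1 if i ≥ min I and x_i = 0, w_i = +1 if i ≥ min I and x_i = 1, and w_i = 0 if i < min I; and define P_b := {i > α : x_i = b} for b ∈ {0,1}. Then min{ w·y : y ∈ X, y_{P_0} = 0, y_{P_1} = 1 } < w·x if and only if there exists y ∈ X \ {x} with λ(x,y) ∈ I and λ(x,y) ≤ α. -/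
def dotB {n : ℕ} (w : Fin n → ℤ) (y : Fin n → Bool) : ℤ :=
  ∑ i, w i * (if y i then 1 else 0)

/-
Against the weight `w`, lowering `w · y` below `w · x` is the same as differing from `x` at some
position `i ≥ min I` (each such position costs exactly one unit), while fixing `y` on `P_0 ∪ P_1`
is the same as `λ(x, y) ≤ α`. Since `λ(x, y)` is the largest differing position, both conditions
together say `min I ≤ λ(x, y) ≤ α`, i.e. `λ(x, y) ∈ I` by convexity of `I`.
-/

section Threshold

variable {n : ℕ} (m : ℕ) (w : Fin n → ℤ) (x y : Fin n → Bool)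

theorem dotB_sub_eq_card
    (hw : ∀ i : Fin n, w i = if m ≤ (i : ℕ) + 1 then (if x i then 1 else -1) else 0) :
    dotB w x - dotB w y = (Finset.univ.filter (fun i : Fin n => m ≤ (i : ℕ) + 1 ∧ x i ≠ y i)).card := by
  rw [dotB, dotB, ← Finset.sum_sub_distrib, Finset.card_filter]
  push_cast
  refine Finset.sum_congr rfl fun i _ => ?_
  rw [hw i]
  cases x i <;> cases y i <;> split_ifs <;> simp_all

theorem dotB_lt_iff_exists_ne
    (hw : ∀ i : Fin n, w i = if m ≤ (i : ℕ) + 1 then (if x i then 1 else -1) else 0) :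
    dotB w y < dotB w x ↔ ∃ i : Fin n, m ≤ (i : ℕ) + 1 ∧ x i ≠ y i := by
  rw [← sub_pos, dotB_sub_eq_card m w x y hw, Nat.cast_pos, Finset.card_pos,
    Finset.filter_nonempty_iff]
  simp only [Finset.mem_univ, true_and]

end Threshold

section LamPos

variable {n : ℕ} (x y : Fin n → Bool)

theorem lamPos_le_iff (k : ℕ) : lamPos x y ≤ k ↔ ∀ i : Fin n, k < (i : ℕ) + 1 → y i = x i := by
  simp only [lamPos, Finset.sup_le_iff, Finset.mem_filter, Finset.mem_univ, true_and]
  refine forall_congr' fun i => ?_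
  rw [← not_imp_not, not_le, not_not, eq_comm]

theorem le_lamPos_of_ne {i : Fin n} (h : x i ≠ y i) : (i : ℕ) + 1 ≤ lamPos x y :=
  Finset.le_sup (f := fun j : Fin n => (j : ℕ) + 1) (by simpa using h)

theorem exists_ne_and_lamPos_eq (h : y ≠ x) : ∃ i : Fin n, x i ≠ y i ∧ lamPos x y = (i : ℕ) + 1 := by
  have hne : (Finset.univ.filter fun i : Fin n => x i ≠ y i).Nonempty := by
    obtain ⟨i, hi⟩ := Function.ne_iff.mp h
    exact ⟨i, by simpa using Ne.symm hi⟩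
  obtain ⟨i, hi, hsup⟩ := Finset.exists_mem_eq_sup _ hne fun i : Fin n => (i : ℕ) + 1
  exact ⟨i, (Finset.mem_filter.mp hi).2, hsup⟩

theorem exists_ne_iff_le_lamPos (m : ℕ) :
    (∃ i : Fin n, m ≤ (i : ℕ) + 1 ∧ x i ≠ y i) ↔ y ≠ x ∧ m ≤ lamPos x y := by
  constructor
  · rintro ⟨i, hmi, hi⟩
    exact ⟨fun h => hi (by rw [h]), hmi.trans (le_lamPos_of_ne x y hi)⟩
  · rintro ⟨hne, hm⟩
    obtain ⟨i, hi, hlam⟩ := exists_ne_and_lamPos_eq x y hne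
    exact ⟨i, hlam ▸ hm, hi⟩

end LamPos

theorem unseen_branching_as_LOP_general {n : ℕ} (X : Finset (Fin n → Bool))
    (x : Fin n → Bool)
    (I : Finset ℕ)
    (hIint : ∀ a b c : ℕ, a ∈ I → c ∈ I → a ≤ b → b ≤ c → b ∈ I)
    (α : ℕ) (hα : α ∈ I)
    (w : Fin n → ℤ)
    (hw : ∀ i : Fin n, w i =
      if I.min' ⟨α, hα⟩ ≤ (i : ℕ) + 1 then (if x i then 1 else -1) else 0) :
    (∃ y ∈ X, (∀ i : Fin n, (i : ℕ) + 1 > α → y i = x i) ∧ dotB w y < dotB w x)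
    ↔ (∃ y ∈ X, y ≠ x ∧ lamPos x y ∈ I ∧ lamPos x y ≤ α) := by
  set m := I.min' ⟨α, hα⟩
  have mem_I_iff : ∀ y, lamPos x y ≤ α → (lamPos x y ∈ I ↔ m ≤ lamPos x y) := fun y hle =>
    ⟨I.min'_le _, fun hm => hIint m _ α (I.min'_mem _) hα hm hle⟩
  refine exists_congr fun y => and_congr_right fun _ => ?_
  rw [← lamPos_le_iff, dotB_lt_iff_exists_ne m w x y hw, exists_ne_iff_le_lamPos]
  constructor
  · rintro ⟨hle, hne, hm⟩
    exact ⟨hne, (mem_I_iff y hle).mpr hm, hle⟩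
  · rintro ⟨hne, hI, hle⟩
    exact ⟨hle, hne, (mem_I_iff y hle).mp hI⟩

theorem unseen_branching_as_LOP {n : ℕ} (X : Finset (Fin n → Bool))
    (x : Fin n → Bool) (hx : x ∈ X)
    (I : Finset ℕ) (hIsub : ∀ i ∈ I, 1 ≤ i ∧ i ≤ n)
    (hIint : ∀ a b c : ℕ, a ∈ I → c ∈ I → a ≤ b → b ≤ c → b ∈ I)
    (α : ℕ) (hα : α ∈ I)
    (w : Fin n → ℤ)
    (hw : ∀ i : Fin n, w i =
      if I.min' ⟨α, hα⟩ ≤ (i : ℕ) + 1 then (if x i then 1 else -1) else 0) :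
    (∃ y ∈ X, (∀ i : Fin n, (i : ℕ) + 1 > α → y i = x i) ∧ dotB w y < dotB w x)
    ↔ (∃ y ∈ X, y ≠ x ∧ lamPos x y ∈ I ∧ lamPos x y ≤ α) :=
  unseen_branching_as_LOP_general X x I hIint α hα w hw
end

section
/- Let X ⊆ {0,1}^n, w ∈ {−1,0,+1}^n, c ∈ Z^n, X_c := argmin{ c·x : x ∈ X }, w' := w + n·c. Suppose β ∈ [n] is such that all elements of X agree in position β (y_β = y'_β for all y, y' ∈ X). Then argmin{ w'·y : y ∈ X_c } = argmin{ w'·y : y ∈ X }. -/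
/-! Splitting `w'·y = w·y + n (c·y)`, the `w`-part can change by at most `n - 1` between two
points of `X`: they differ in at most `n - 1` coordinates (never in `β`), each worth at most `1`.
The term `n (c·y)` jumps by at least `n` when `c·y` increases, so `w'` strictly refines the
order given by `c`, and minimising `w'` over `X` only ever picks `c`-minimisers. -/

theorem setOf_lexMin_eq_setOf_min {α β γ : Type*} [LinearOrder β] [Preorder γ]
    (s : Set α) (f : α → γ) (g : α → β)
    (hfg : ∀ y ∈ s, ∀ z ∈ s, g y < g z → f y < f z) :
    {y | y ∈ s ∧ (∀ z ∈ s, g y ≤ g z) ∧ ∀ z ∈ s, (∀ z' ∈ s, g z ≤ g z') → f y ≤ f z}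
    = {y | y ∈ s ∧ ∀ z ∈ s, f y ≤ f z} := by
  ext y
  constructor
  · rintro ⟨hy, hgy, hfy⟩
    refine ⟨hy, fun z hz => ?_⟩
    by_cases hgz : ∀ z' ∈ s, g z ≤ g z'
    · exact hfy z hz hgz
    · obtain ⟨z', hz', hlt⟩ : ∃ z' ∈ s, g z' < g z := by simpa using hgz
      exact (hfg y hy z hz ((hgy z' hz').trans_lt hlt)).le
  · rintro ⟨hy, hfy⟩
    have hgy : ∀ z ∈ s, g y ≤ g z := fun z hz =>
      le_of_not_gt fun hlt => (hfg z hz y hy hlt).not_ge (hfy z hz)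
    exact ⟨hy, hgy, fun z hz _ => hfy z hz⟩

theorem dotB_add_mul {n : ℕ} (w c : Fin n → ℤ) (k : ℤ) (y : Fin n → Bool) :
    dotB (fun i => w i + k * c i) y = dotB w y + k * dotB c y := by
  simp only [dotB, Finset.mul_sum, ← Finset.sum_add_distrib]
  exact Finset.sum_congr rfl fun i _ => by ring

theorem dotB_sub_dotB_le_hamming {n : ℕ} {w : Fin n → ℤ} (hw : ∀ i, |w i| ≤ 1)
    (y z : Fin n → Bool) : dotB w y - dotB w z ≤ hamming y z := by
  rw [hamming, Finset.card_filter, Nat.cast_sum, dotB, dotB, ← Finset.sum_sub_distrib]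
  gcongr with i
  have := abs_le.mp (hw i)
  cases y i <;> cases z i <;> simp <;> omega

theorem hamming_lt_of_apply_eq {n : ℕ} {y z : Fin n → Bool} {β : Fin n} (h : y β = z β) :
    hamming y z < n := by
  have hβ : β ∉ Finset.univ.filter fun i => y i ≠ z i := by simpa using h
  simpa [hamming] using Finset.card_lt_univ_of_notMem hβ

theorem add_mul_lt_add_mul_of_lt {a a' b b' k : ℤ} (hk : 0 ≤ k) (ha : a - a' < k)
    (hb : b < b') : a + k * b < a' + k * b' := by
  nlinarith [mul_le_mul_of_nonneg_left (Int.add_one_le_of_lt hb) hk]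

theorem weight_amplification_ii_general {n : ℕ} (X : Finset (Fin n → Bool))
    (w : Fin n → ℤ) (hw : ∀ i, w i ∈ ({-1, 0, 1} : Set ℤ))
    (c : Fin n → ℤ)
    (w' : Fin n → ℤ) (hw' : ∀ i, w' i = w i + n * c i)
    (β : Fin n) (hagree : ∀ y ∈ X, ∀ y' ∈ X, y β = y' β) :
    {y | y ∈ X ∧ (∀ z ∈ X, dotB c y ≤ dotB c z) ∧
        ∀ z ∈ X, (∀ z' ∈ X, dotB c z ≤ dotB c z') → dotB w' y ≤ dotB w' z}
    = {y | y ∈ X ∧ ∀ z ∈ X, dotB w' y ≤ dotB w' z} := by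
  obtain rfl : w' = fun i => w i + n * c i := funext hw'
  have hw_abs : ∀ i, |w i| ≤ 1 := fun i => by
    rcases (by simpa using hw i : w i = -1 ∨ w i = 0 ∨ w i = 1) with h | h | h <;> simp [h]
  refine setOf_lexMin_eq_setOf_min (X : Set (Fin n → Bool)) _ _ fun y hy z hz hlt => ?_
  simp only [dotB_add_mul]
  refine add_mul_lt_add_mul_of_lt (Int.natCast_nonneg n) ?_ hlt
  calc dotB w y - dotB w z ≤ hamming y z := dotB_sub_dotB_le_hamming hw_abs y z
    _ < n := by exact_mod_cast hamming_lt_of_apply_eq (hagree y hy z hz)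

theorem weight_amplification_ii {n : ℕ} (X : Finset (Fin n → Bool)) (hX : X.Nonempty)
    (w : Fin n → ℤ) (hw : ∀ i, w i ∈ ({-1, 0, 1} : Set ℤ))
    (c : Fin n → ℤ)
    (w' : Fin n → ℤ) (hw' : ∀ i, w' i = w i + n * c i)
    (β : Fin n) (hagree : ∀ y ∈ X, ∀ y' ∈ X, y β = y' β) :
    {y | y ∈ X ∧ (∀ z ∈ X, dotB c y ≤ dotB c z) ∧
        ∀ z ∈ X, (∀ z' ∈ X, dotB c z ≤ dotB c z') → dotB w' y ≤ dotB w' z}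
    = {y | y ∈ X ∧ ∀ z ∈ X, dotB w' y ≤ dotB w' z} :=
  weight_amplification_ii_general X w hw c w' hw' β hagree
end
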